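/- arXiv:2407.15720 — 5 statements merged into one kernel-verified Lean document; each statement's English description precedes it below -/
import Mathlib

section
/- The infimum of the loss ℓ̃(U,u) := tr(½·u²·Γ·Λ·U·Λ·Uᵀ − u·Λ²·Uᵀ) over all U ∈ ℝ^{d×d} and u ∈ ℝ equals −½·tr(Λ²·Γ⁻¹), and for every nonzero real constant c the pair (U,u) = (c·Γ⁻¹, 1/c) attains this infimum. -/
/-!
Since `Γ` is a polynomial in `Λ`, the two commute and `ΓΛΓ⁻¹ = Λ`. Completing the square in
`V = u • U` then gives
`ℓ̃(U, u) = ½ tr(ΓΛ (V - Γ⁻¹) Λ (V - Γ⁻¹)ᵀ) - ½ tr(Λ²Γ⁻¹)`.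
Here `ΓΛ = (1 + 1/N) Λ² + (tr Λ / N) Λ` and `(V - Γ⁻¹) Λ (V - Γ⁻¹)ᵀ` are positive semidefinite,
and the trace of a product of two positive semidefinite matrices is nonnegative (conjugate by a
square root), so the square term is `≥ 0`; it vanishes at `V = Γ⁻¹`, e.g. at `(c • Γ⁻¹, 1 / c)`.
-/

open Matrix

namespace Matrix

open scoped MatrixOrder ComplexOrder in
theorem PosSemidef.trace_mul_nonneg {𝕜 : Type*} [RCLike 𝕜] {n : Type*} [Fintype n]
    [DecidableEq n] {A B : Matrix n n 𝕜} (hA : A.PosSemidef) (hB : B.PosSemidef) :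
    0 ≤ (A * B).trace := by
  have hsqrt : (CFC.sqrt B)ᴴ = CFC.sqrt B := (CFC.sqrt_nonneg B).posSemidef.isHermitian.eq
  calc (0 : 𝕜) ≤ (CFC.sqrt B * A * (CFC.sqrt B)ᴴ).trace :=
        (hA.mul_mul_conjTranspose_same _).trace_nonneg
    _ = (A * B).trace := by
        rw [hsqrt, trace_mul_cycle, CFC.sqrt_mul_sqrt_self B hB.nonneg, trace_mul_comm]

theorem PosDef.smul_add_smul_one {n : Type*} [Fintype n] [DecidableEq n] {Λ : Matrix n n ℝ}
    (hΛ : Λ.PosDef) {a b : ℝ} (ha : 0 < a) (hb : 0 ≤ b) : (a • Λ + b • (1 : Matrix n n ℝ)).PosDef :=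
  (hΛ.smul ha).add_posSemidef (PosSemidef.one.smul hb)

theorem PosSemidef.smul_add_smul_one_mul_self {n : Type*} [Fintype n] [DecidableEq n]
    {Λ : Matrix n n ℝ} (hΛ : Λ.PosSemidef) {a b : ℝ} (ha : 0 ≤ a) (hb : 0 ≤ b) :
    ((a • Λ + b • (1 : Matrix n n ℝ)) * Λ).PosSemidef := by
  rw [Matrix.add_mul, smul_mul_assoc, smul_mul_assoc, Matrix.one_mul, ← sq]
  exact ((hΛ.pow 2).smul ha).add (hΛ.smul hb)

section CompleteSquare

variable {R : Type*} [CommRing R] {n : Type*} [Fintype n] [DecidableEq n]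
  {Γ Λ : Matrix n n R}

theorem trace_mul_sub_inv_mul_transpose (hΓ : IsUnit Γ.det) (hΓt : Γᵀ = Γ) (hΛt : Λᵀ = Λ)
    (hcomm : Commute Γ Λ) (V : Matrix n n R) :
    (Γ * Λ * (V - Γ⁻¹) * Λ * (V - Γ⁻¹)ᵀ).trace =
      (Γ * Λ * V * Λ * Vᵀ).trace - 2 * (Λ ^ 2 * Vᵀ).trace + (Λ ^ 2 * Γ⁻¹).trace := by
  have hconj : Γ * Λ * Γ⁻¹ = Λ := by rw [hcomm.eq, mul_nonsing_inv_cancel_right _ _ hΓ]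
  have hcross : (Γ * Λ * V * Λ * Γ⁻¹).trace = (Λ ^ 2 * Vᵀ).trace := by
    rw [trace_mul_comm, ← Matrix.mul_assoc, ← Matrix.mul_assoc, ← Matrix.mul_assoc,
      nonsing_inv_mul _ hΓ, Matrix.one_mul, trace_mul_comm, ← Matrix.mul_assoc, ← sq,
      ← trace_transpose, transpose_mul, transpose_pow, hΛt, trace_mul_comm]
  rw [transpose_sub, transpose_nonsing_inv, hΓt]
  simp only [Matrix.mul_sub, Matrix.sub_mul, trace_sub, hconj, hcross]
  rw [sq]
  ring

end CompleteSquare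

variable {n : Type*} [Fintype n] [DecidableEq n] {Γ Λ : Matrix n n ℝ}

theorem trace_loss_eq_completed_square (hΓ : IsUnit Γ.det) (hΓt : Γᵀ = Γ) (hΛt : Λᵀ = Λ)
    (hcomm : Commute Γ Λ) (U : Matrix n n ℝ) (u : ℝ) :
    ((u ^ 2 / 2) • (Γ * Λ * U * Λ * Uᵀ) - u • (Λ ^ 2 * Uᵀ)).trace =
      (1 / 2) * (Γ * Λ * (u • U - Γ⁻¹) * Λ * (u • U - Γ⁻¹)ᵀ).trace
        - (1 / 2) * (Λ ^ 2 * Γ⁻¹).trace := by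
  rw [trace_mul_sub_inv_mul_transpose hΓ hΓt hΛt hcomm, trace_sub, trace_smul, trace_smul]
  simp only [transpose_smul, Matrix.mul_smul, Matrix.smul_mul, trace_smul, smul_eq_mul]
  ring

theorem trace_mul_mul_mul_transpose_nonneg {P : Matrix n n ℝ} (hP : P.PosSemidef)
    (hΛ : Λ.PosSemidef) (W : Matrix n n ℝ) : 0 ≤ (P * W * Λ * Wᵀ).trace := by
  have h := hP.trace_mul_nonneg (hΛ.mul_mul_conjTranspose_same W)
  rwa [conjTranspose_eq_transpose_of_trivial, ← Matrix.mul_assoc, ← Matrix.mul_assoc] at h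

end Matrix

theorem stmt_0_general (d N : ℕ)
    (Λ : Matrix (Fin d) (Fin d) ℝ) (hΛ : Λ.PosDef)
    (Γ : Matrix (Fin d) (Fin d) ℝ)
    (hΓ : Γ = (1 + 1 / (N : ℝ)) • Λ +
      (Matrix.trace Λ / (N : ℝ)) • (1 : Matrix (Fin d) (Fin d) ℝ))
    (ℓ : Matrix (Fin d) (Fin d) ℝ → ℝ → ℝ)
    (hℓ : ∀ U u, ℓ U u =
      Matrix.trace ((u ^ 2 / 2) • (Γ * Λ * U * Λ * Uᵀ) - u • (Λ ^ 2 * Uᵀ))) :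
    IsLeast (Set.range fun p : Matrix (Fin d) (Fin d) ℝ × ℝ => ℓ p.1 p.2)
      (-(1 / 2) * Matrix.trace (Λ ^ 2 * Γ⁻¹)) ∧
    ∀ c : ℝ, c ≠ 0 →
      ℓ (c • Γ⁻¹) (1 / c) = -(1 / 2) * Matrix.trace (Λ ^ 2 * Γ⁻¹) := by
  have ha : 0 < 1 + 1 / (N : ℝ) := by positivity
  have hb : 0 ≤ Λ.trace / N := div_nonneg hΛ.posSemidef.trace_nonneg N.cast_nonneg
  have hΓpd : Γ.PosDef := hΓ ▸ hΛ.smul_add_smul_one ha hb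
  have hΓΛ : (Γ * Λ).PosSemidef := hΓ ▸ hΛ.posSemidef.smul_add_smul_one_mul_self ha.le hb
  have hcomm : Commute Γ Λ := hΓ ▸ (((Commute.refl Λ).smul_left _).add_left
    ((Commute.one_left Λ).smul_left _))
  have hloss : ∀ U u, ℓ U u = (1 / 2) * (Γ * Λ * (u • U - Γ⁻¹) * Λ * (u • U - Γ⁻¹)ᵀ).trace
      - (1 / 2) * (Λ ^ 2 * Γ⁻¹).trace := fun U u =>
    (hℓ U u).trans <| trace_loss_eq_completed_square hΓpd.det_pos.ne'.isUnit
      hΓpd.isHermitian.eq hΛ.isHermitian.eq hcomm U u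
  have hattain : ∀ c : ℝ, c ≠ 0 → ℓ (c • Γ⁻¹) (1 / c) = -(1 / 2) * (Λ ^ 2 * Γ⁻¹).trace := by
    intro c hc
    rw [hloss, smul_smul, one_div_mul_cancel hc, one_smul, sub_self]
    simp
  refine ⟨⟨⟨(Γ⁻¹, 1), by simpa using hattain 1 one_ne_zero⟩, ?_⟩, hattain⟩
  rintro _ ⟨⟨U, u⟩, rfl⟩
  have := trace_mul_mul_mul_transpose_nonneg hΓΛ hΛ.posSemidef (u • U - Γ⁻¹)
  linarith [hloss U u]

/-- The infimum of the loss
`ℓ̃(U,u) := tr(½·u²·Γ·Λ·U·Λ·Uᵀ − u·Λ²·Uᵀ)` over all `U ∈ ℝ^{d×d}` and `u ∈ ℝ`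
equals `−½·tr(Λ²·Γ⁻¹)`, and for every nonzero real `c` the pair
`(U,u) = (c·Γ⁻¹, 1/c)` attains this infimum. -/
theorem stmt_0 (d N : ℕ) (hd : 0 < d) (hN : 0 < N)
    (Λ : Matrix (Fin d) (Fin d) ℝ) (hΛ : Λ.PosDef)
    (Γ : Matrix (Fin d) (Fin d) ℝ)
    (hΓ : Γ = (1 + 1 / (N : ℝ)) • Λ +
      (Matrix.trace Λ / (N : ℝ)) • (1 : Matrix (Fin d) (Fin d) ℝ))
    (ℓ : Matrix (Fin d) (Fin d) ℝ → ℝ → ℝ)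
    (hℓ : ∀ U u, ℓ U u =
      Matrix.trace ((u ^ 2 / 2) • (Γ * Λ * U * Λ * Uᵀ) - u • (Λ ^ 2 * Uᵀ))) :
    IsLeast (Set.range fun p : Matrix (Fin d) (Fin d) ℝ × ℝ => ℓ p.1 p.2)
      (-(1 / 2) * Matrix.trace (Λ ^ 2 * Γ⁻¹)) ∧
    ∀ c : ℝ, c ≠ 0 →
      ℓ (c • Γ⁻¹) (1 / c) = -(1 / 2) * Matrix.trace (Λ ^ 2 * Γ⁻¹) :=
  stmt_0_general d N Λ hΛ Γ hΓ ℓ hℓ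
end

section
/- Every global minimizer (U,u) of the loss ℓ̃ over ℝ^{d×d} × ℝ satisfies u·U = Γ⁻¹. -/
open Matrix

/-!
The loss depends on `(U, u)` only through `V = u • U`: it equals
`F V = ½ tr(ΓΛ V Λ Vᵀ) - tr(Λ² Vᵀ)`, and `ℓ̃(W, 1) = F W`. So `u • U` minimizes `F`. Since `Γ`
commutes with `Λ`, both `ΓΛ` and `Λ` are symmetric and the directional derivative of `F` at `V`
along `Δ` is `tr((ΓΛVΛ - Λ²) Δᵀ)`; it vanishes for every `Δ`, so `ΓΛVΛ = Λ²`, and cancelling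
the invertible `Λ` leaves `ΓV = 1`.
-/

theorem eq_zero_of_forall_nonneg_mul_add_sq_mul {L Q : ℝ}
    (h : ∀ t : ℝ, 0 ≤ t * L + t ^ 2 * Q) : L = 0 := by
  set s := 1 / (|Q| + 1)
  have hs : 0 < s := by positivity
  have hsQ : s * Q < 1 := by
    rw [div_mul_eq_mul_div, one_mul, div_lt_one (by positivity)]
    linarith [le_abs_self Q]
  have hneg : L ^ 2 * (s * (1 - s * Q)) ≤ 0 := by linarith [h (-s * L)]
  exact pow_eq_zero_iff two_ne_zero |>.mp <|
    le_antisymm (nonpos_of_mul_nonpos_left hneg (mul_pos hs (sub_pos.2 hsQ))) (sq_nonneg L)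

namespace Matrix

variable {n R : Type*} [Fintype n]

theorem trace_mul_mul_mul_transpose_comm [CommRing R] {A B : Matrix n n R} (hA : Aᵀ = A)
    (hB : Bᵀ = B) (X Y : Matrix n n R) :
    trace (A * X * B * Yᵀ) = trace (A * Y * B * Xᵀ) := by
  rw [← trace_transpose]
  simp only [transpose_mul, transpose_transpose, hA, hB, Matrix.mul_assoc]
  rw [trace_mul_comm A]
  simp only [Matrix.mul_assoc]

noncomputable def quadraticLoss (A B C W : Matrix n n ℝ) : ℝ :=
  trace (A * W * B * Wᵀ) / 2 - trace (C * Wᵀ)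

theorem quadraticLoss_smul (A B C U : Matrix n n ℝ) (u : ℝ) :
    quadraticLoss A B C (u • U) = trace ((u ^ 2 / 2) • (A * U * B * Uᵀ) - u • (C * Uᵀ)) := by
  simp only [quadraticLoss, trace_sub, trace_smul, smul_eq_mul, Matrix.mul_smul,
    Matrix.smul_mul, transpose_smul]
  ring

theorem quadraticLoss_add_smul {A B : Matrix n n ℝ} (hA : Aᵀ = A) (hB : Bᵀ = B)
    (C V Δ : Matrix n n ℝ) (t : ℝ) :
    quadraticLoss A B C (V + t • Δ) = quadraticLoss A B C V
      + t * trace ((A * V * B - C) * Δᵀ) + t ^ 2 * (trace (A * Δ * B * Δᵀ) / 2) := by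
  simp only [quadraticLoss, transpose_add, transpose_smul, Matrix.mul_add, Matrix.add_mul,
    Matrix.mul_smul, Matrix.smul_mul, Matrix.sub_mul, trace_add, trace_sub, trace_smul,
    smul_eq_mul, trace_mul_mul_mul_transpose_comm hA hB Δ V]
  ring

theorem mul_mul_mul_eq_of_forall_quadraticLoss_le {A B C V : Matrix n n ℝ} (hA : Aᵀ = A)
    (hB : Bᵀ = B) (hV : ∀ W, quadraticLoss A B C V ≤ quadraticLoss A B C W) :
    A * V * B = C := by
  have hgrad : ∀ Δ, trace ((A * V * B - C) * Δᵀ) = 0 := fun Δ ↦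
    eq_zero_of_forall_nonneg_mul_add_sq_mul (Q := trace (A * Δ * B * Δᵀ) / 2) fun t ↦ by
      linarith [hV (V + t • Δ), quadraticLoss_add_smul hA hB C V Δ t]
  have := hgrad (A * V * B - C)
  rw [← conjTranspose_eq_transpose_of_trivial, trace_mul_conjTranspose_self_eq_zero_iff] at this
  exact sub_eq_zero.mp this

theorem eq_inv_of_mul_mul_mul_eq_sq [DecidableEq n] [CommRing R] {Γ Λ V : Matrix n n R}
    (hΛ : IsUnit Λ) (hcomm : Commute Γ Λ) (h : Γ * Λ * V * Λ = Λ ^ 2) : V = Γ⁻¹ := by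
  have hΓΛV : Γ * Λ * V = Λ :=
    hΛ.mul_left_injective (show Γ * Λ * V * Λ = Λ * Λ by rwa [← sq])
  have hΓV : Γ * V = 1 := hΛ.mul_right_injective <| show Λ * (Γ * V) = Λ * 1 by
    rwa [Matrix.mul_one, ← Matrix.mul_assoc, ← hcomm.eq]
  exact (inv_eq_right_inv hΓV).symm

end Matrix

theorem stmt_2_general (d N : ℕ)
    (Λ : Matrix (Fin d) (Fin d) ℝ) (hΛ : Λ.PosDef)
    (Γ : Matrix (Fin d) (Fin d) ℝ)
    (hΓ : Γ = (1 + 1 / (N : ℝ)) • Λ +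
      (Matrix.trace Λ / (N : ℝ)) • (1 : Matrix (Fin d) (Fin d) ℝ))
    (ℓ : Matrix (Fin d) (Fin d) ℝ → ℝ → ℝ)
    (hℓ : ∀ U u, ℓ U u =
      Matrix.trace ((u ^ 2 / 2) • (Γ * Λ * U * Λ * Uᵀ) - u • (Λ ^ 2 * Uᵀ))) :
    ∀ (U : Matrix (Fin d) (Fin d) ℝ) (u : ℝ),
      (∀ (U' : Matrix (Fin d) (Fin d) ℝ) (u' : ℝ), ℓ U u ≤ ℓ U' u') →
      u • U = Γ⁻¹ := by
  intro U u hmin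
  have hΛsymm : Λᵀ = Λ := hΛ.isHermitian
  have hΓsymm : Γᵀ = Γ := by simp [hΓ, hΛsymm]
  have hcomm : Commute Γ Λ := hΓ ▸
    ((Commute.refl Λ).smul_left _).add_left ((Commute.one_left Λ).smul_left _)
  have hΓΛsymm : (Γ * Λ)ᵀ = Γ * Λ := by rw [transpose_mul, hΛsymm, hΓsymm, hcomm.eq]
  have hV : ∀ W,
      quadraticLoss (Γ * Λ) Λ (Λ ^ 2) (u • U) ≤ quadraticLoss (Γ * Λ) Λ (Λ ^ 2) W := by
    intro W
    have h := hmin W 1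
    rwa [hℓ, hℓ, ← quadraticLoss_smul, ← quadraticLoss_smul, one_smul] at h
  exact eq_inv_of_mul_mul_mul_eq_sq hΛ.isUnit hcomm
    (mul_mul_mul_eq_of_forall_quadraticLoss_le hΓΛsymm hΛsymm hV)

/-- Every global minimizer `(U,u)` of the loss
`ℓ̃(U,u) := tr(½·u²·Γ·Λ·U·Λ·Uᵀ − u·Λ²·Uᵀ)` over `ℝ^{d×d} × ℝ`
satisfies `u·U = Γ⁻¹`. -/
theorem stmt_2 (d N : ℕ) (hd : 0 < d) (hN : 0 < N)
    (Λ : Matrix (Fin d) (Fin d) ℝ) (hΛ : Λ.PosDef)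
    (Γ : Matrix (Fin d) (Fin d) ℝ)
    (hΓ : Γ = (1 + 1 / (N : ℝ)) • Λ +
      (Matrix.trace Λ / (N : ℝ)) • (1 : Matrix (Fin d) (Fin d) ℝ))
    (ℓ : Matrix (Fin d) (Fin d) ℝ → ℝ → ℝ)
    (hℓ : ∀ U u, ℓ U u =
      Matrix.trace ((u ^ 2 / 2) • (Γ * Λ * U * Λ * Uᵀ) - u • (Λ ^ 2 * Uᵀ))) :
    ∀ (U : Matrix (Fin d) (Fin d) ℝ) (u : ℝ),
      (∀ (U' : Matrix (Fin d) (Fin d) ℝ) (u' : ℝ), ℓ U u ≤ ℓ U' u') →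
      u • U = Γ⁻¹ :=
  stmt_2_general d N Λ hΛ Γ hΓ ℓ hℓ
end

section
/- Fix r with 1 ≤ r ≤ d, and let V* = diag(v*₁,…,v*_d) where v*_i = N/((N+1)·λ_i + tr(D)) for i ≤ r and v*_i = 0 for i > r. Then for every nonzero real constant c, the pair (U,u) = (c·Q·V*·Qᵀ, 1/c) minimizes ℓ̃(U,u) over all U ∈ ℝ^{d×d} with rank(U) ≤ r and all u ∈ ℝ; that is, ℓ̃(Q·V*·Qᵀ, 1) ≤ ℓ̃(U,u) whenever rank(U) ≤ r. -/
/-!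
Conjugating by `Q` diagonalizes `Λ` and `Γ`, with eigenvalues `λᵢ` and
`γᵢ = (1 + 1/N) λᵢ + tr Λ / N`, and for `M = Qᵀ U Q` the loss becomes
`u²/2 · Σᵢⱼ γᵢ λᵢ λⱼ Mᵢⱼ² - u · Σᵢ λᵢ² Mᵢᵢ`, whose minimum over `u` is
`-(Σᵢ λᵢ² Mᵢᵢ)² / (2 Σᵢⱼ γᵢ λᵢ λⱼ Mᵢⱼ²)`. After rescaling rows and columns of `M`,
Cauchy–Schwarz through the orthogonal projection `P` onto the column space bounds this ratio by
`Σᵢ (λᵢ²/γᵢ) ‖P eᵢ‖²`, where the weights `‖P eᵢ‖²` lie in `[0, 1]` and add up to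
`rank M ≤ r`. As `λᵢ²/γᵢ` decreases in `i`, the weighted sum is at most `Σ_{i<r} λᵢ²/γᵢ`,
which is exactly the value attained by `(c Q V* Qᵀ, 1/c)`.
-/

open Matrix Finset
open scoped RealInnerProductSpace

theorem sum_mul_le_sum_of_threshold {ι : Type*} [Fintype ι] (s : Finset ι) {a t : ι → ℝ}
    {θ : ℝ} (hθ : 0 ≤ θ) (has : ∀ i ∈ s, θ ≤ a i) (hat : ∀ i ∉ s, a i ≤ θ)
    (ht0 : ∀ i, 0 ≤ t i) (ht1 : ∀ i, t i ≤ 1) (hts : ∑ i, t i ≤ #s) :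
    ∑ i, a i * t i ≤ ∑ i ∈ s, a i := by
  classical
  have hpt : ∀ i, a i * t i - (if i ∈ s then a i else 0) ≤
      θ * (t i - if i ∈ s then 1 else 0) := by
    intro i
    split_ifs with hi
    · nlinarith [has i hi, ht1 i]
    · nlinarith [hat i hi, ht0 i]
  have hsum := Finset.sum_le_sum fun i (_ : i ∈ univ) => hpt i
  simp only [Finset.sum_sub_distrib, ← Finset.mul_sum, Finset.sum_ite_mem, univ_inter,
    Finset.sum_const, nsmul_eq_mul, mul_one] at hsum
  nlinarith

theorem Fin.sum_mul_le_sum_lt_of_antitone {d r : ℕ} {a t : Fin d → ℝ} (ha : Antitone a)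
    (ha0 : ∀ i, 0 ≤ a i) (ht0 : ∀ i, 0 ≤ t i) (ht1 : ∀ i, t i ≤ 1) (htr : ∑ i, t i ≤ r) :
    ∑ i, a i * t i ≤ ∑ i with i.val < r, a i := by
  by_cases hrd : r < d
  · have hs : ({i | i.val < r} : Finset (Fin d)) = Iio ⟨r, hrd⟩ := by
      ext i; simp [Fin.lt_def]
    refine sum_mul_le_sum_of_threshold _ (ha0 ⟨r, hrd⟩) (fun i hi => ha ?_) (fun i hi => ha ?_)
      ht0 ht1 ?_
    · simp only [hs, mem_Iio] at hi; exact hi.le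
    · simpa [hs] using hi
    · simpa [hs] using htr
  · have hs : ({i | i.val < r} : Finset (Fin d)) = univ := by
      ext i; simpa using i.isLt.trans_le (not_lt.mp hrd)
    rw [hs]
    exact Finset.sum_le_sum fun i _ => mul_le_of_le_one_right (ha0 i) (ht1 i)

section Projection

variable {ι E : Type*} [Fintype ι] [NormedAddCommGroup E] [InnerProductSpace ℝ E]

theorem Submodule.sum_norm_sq_starProjection_eq_finrank [FiniteDimensional ℝ E]
    (K : Submodule ℝ E) (b : OrthonormalBasis ι ℝ E) :
    ∑ i, ‖K.starProjection (b i)‖ ^ 2 = Module.finrank ℝ K := by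
  have hproj : LinearMap.IsProj K (K.starProjection : E →ₗ[ℝ] E) :=
    ⟨K.starProjection_apply_mem, fun _ hx => K.starProjection_eq_self_iff.mpr hx⟩
  calc ∑ i, ‖K.starProjection (b i)‖ ^ 2
      = ∑ i, ⟪b i, (K.starProjection : E →ₗ[ℝ] E) (b i)⟫ := by
        refine Finset.sum_congr rfl fun i _ => ?_
        rw [← real_inner_self_eq_norm_sq, K.inner_starProjection_left_eq_right,
          K.starProjection_eq_self_iff.mpr (K.starProjection_apply_mem _)]
        rfl
    _ = Module.finrank ℝ K := by
        rw [← LinearMap.trace_eq_sum_inner, hproj.trace]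

theorem Submodule.sq_sum_mul_inner_le (K : Submodule ℝ E) [K.HasOrthogonalProjection]
    (c : ι → ℝ) (v x : ι → E) (hx : ∀ i, x i ∈ K) :
    (∑ i, c i * ⟪v i, x i⟫) ^ 2 ≤
      (∑ i, c i ^ 2 * ‖K.starProjection (v i)‖ ^ 2) * ∑ i, ‖x i‖ ^ 2 := by
  have hproj : ∀ i, c i * ⟪v i, x i⟫ = ⟪c i • K.starProjection (v i), x i⟫ := fun i => by
    rw [real_inner_smul_left, K.inner_starProjection_left_eq_right,
      K.starProjection_eq_self_iff.mpr (hx i)]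
  have habs : |∑ i, c i * ⟪v i, x i⟫| ≤ ∑ i, ‖c i • K.starProjection (v i)‖ * ‖x i‖ := by
    simp_rw [hproj]
    exact (abs_sum_le_sum_abs _ _).trans (sum_le_sum fun i _ => abs_real_inner_le_norm _ _)
  calc (∑ i, c i * ⟪v i, x i⟫) ^ 2
      ≤ (∑ i, ‖c i • K.starProjection (v i)‖ * ‖x i‖) ^ 2 := by
        rw [← sq_abs]; exact pow_le_pow_left₀ (abs_nonneg _) habs 2
    _ ≤ (∑ i, ‖c i • K.starProjection (v i)‖ ^ 2) * ∑ i, ‖x i‖ ^ 2 :=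
        sum_mul_sq_le_sq_mul_sq _ _ _
    _ = (∑ i, c i ^ 2 * ‖K.starProjection (v i)‖ ^ 2) * ∑ i, ‖x i‖ ^ 2 := by
        simp_rw [norm_smul, mul_pow, Real.norm_eq_abs, sq_abs]

end Projection

theorem Matrix.exists_sq_sum_mul_diag_le {n : Type*} [Fintype n] [DecidableEq n]
    (X : Matrix n n ℝ) :
    ∃ t : n → ℝ, (∀ i, 0 ≤ t i) ∧ (∀ i, t i ≤ 1) ∧ ∑ i, t i = X.rank ∧
      ∀ c : n → ℝ, (∑ i, c i * X i i) ^ 2 ≤ (∑ i, c i ^ 2 * t i) * ∑ i, ∑ j, X i j ^ 2 := by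
  set K := LinearMap.range (toEuclideanLin X)
  set e : n → EuclideanSpace ℝ n := fun i => EuclideanSpace.single i 1
  refine ⟨fun i => ‖K.starProjection (e i)‖ ^ 2, fun i => sq_nonneg _, fun i => ?_, ?_,
    fun c => ?_⟩
  · calc ‖K.starProjection (e i)‖ ^ 2 ≤ ‖e i‖ ^ 2 :=
          pow_le_pow_left₀ (norm_nonneg _) (K.norm_starProjection_apply_le _) 2
      _ = 1 := by simp [e]
  · have := K.sum_norm_sq_starProjection_eq_finrank (EuclideanSpace.basisFun n ℝ)
    simp only [EuclideanSpace.basisFun_apply] at this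
    rw [this, rank_eq_finrank_range_toLin X (PiLp.basisFun 2 ℝ n) (PiLp.basisFun 2 ℝ n)]
    rfl
  · have := K.sq_sum_mul_inner_le c e (fun i => toEuclideanLin X (e i)) fun i => ⟨e i, rfl⟩
    convert this using 2
    · refine sum_congr rfl fun i _ => ?_
      simp [e, EuclideanSpace.inner_single_left, toLpLin_apply, mulVec_single]
    · rw [Finset.sum_comm]
      refine sum_congr rfl fun i _ => ?_
      simp [e, EuclideanSpace.norm_sq_eq, toLpLin_apply, mulVec_single]

theorem Matrix.sq_sum_mul_diag_le_of_rank_le {d r : ℕ} {M : Matrix (Fin d) (Fin d) ℝ}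
    (hM : M.rank ≤ r) {p q c a : Fin d → ℝ} (hp : ∀ i, 0 < p i) (hq : ∀ i, 0 < q i)
    (hca : ∀ i, c i ^ 2 = a i * (p i * q i)) (ha : Antitone a) :
    (∑ i, c i * M i i) ^ 2 ≤ (∑ i with i.val < r, a i) * ∑ i, ∑ j, p i * q j * M i j ^ 2 := by
  set s : Fin d → ℝ := fun i => √(p i)
  set u : Fin d → ℝ := fun i => √(q i)
  have hs : ∀ i, s i ^ 2 = p i := fun i => Real.sq_sqrt (hp i).le
  have hu : ∀ i, u i ^ 2 = q i := fun i => Real.sq_sqrt (hq i).le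
  have hs0 : ∀ i, s i ≠ 0 := fun i => Real.sqrt_ne_zero'.mpr (hp i)
  have hu0 : ∀ i, u i ≠ 0 := fun i => Real.sqrt_ne_zero'.mpr (hq i)
  set X := diagonal s * M * diagonal u
  have hX : ∀ i j, X i j = s i * M i j * u j := fun i j => by
    simp [X, mul_diagonal, diagonal_mul]
  have hXr : (X.rank : ℝ) ≤ r := by
    exact_mod_cast ((rank_mul_le_left _ _).trans (rank_mul_le_right _ _)).trans hM
  obtain ⟨t, ht0, ht1, htr, hcs⟩ := X.exists_sq_sum_mul_diag_le
  have key := hcs fun i => c i / (s i * u i)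
  have h1 : ∑ i, c i / (s i * u i) * X i i = ∑ i, c i * M i i :=
    sum_congr rfl fun i _ => by rw [hX]; field_simp [hs0 i, hu0 i]
  have h2 : ∀ i, (c i / (s i * u i)) ^ 2 = a i := fun i => by
    rw [div_pow, mul_pow, hs, hu, hca, mul_div_cancel_right₀ _ (mul_pos (hp i) (hq i)).ne']
  have h3 : ∑ i, ∑ j, X i j ^ 2 = ∑ i, ∑ j, p i * q j * M i j ^ 2 :=
    sum_congr rfl fun i _ => sum_congr rfl fun j _ => by rw [hX, ← hs, ← hu]; ring
  simp only [h1, h2, h3] at key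
  refine key.trans (mul_le_mul_of_nonneg_right ?_ ?_)
  · have ha0 : ∀ i, 0 ≤ a i := fun i => by
      rw [← h2]; exact sq_nonneg _
    exact Fin.sum_mul_le_sum_lt_of_antitone ha ha0 ht0 ht1 (htr ▸ hXr)
  · exact sum_nonneg fun i _ => sum_nonneg fun j _ =>
      mul_nonneg (mul_pos (hp i) (hq j)).le (sq_nonneg _)

theorem neg_div_two_le_of_sq_le_mul {A a b : ℝ} (hA : 0 ≤ A) (hb : 0 ≤ b) (h : a ^ 2 ≤ A * b)
    (v : ℝ) : -A / 2 ≤ v ^ 2 / 2 * b - v * a := by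
  rcases hb.eq_or_lt with rfl | hb
  · have : a = 0 := by nlinarith
    subst this; linarith
  · nlinarith [sq_nonneg (v * b - a)]

theorem antitone_sq_div_of_antitone {ι : Type*} [Preorder ι] {lam : ι → ℝ} (hlam : Antitone lam)
    (hpos : ∀ i, 0 < lam i) {α β : ℝ} (hα : 0 < α) (hβ : 0 ≤ β) :
    Antitone fun i => lam i ^ 2 / (α * lam i + β) := by
  intro i j hij
  have hi := hpos i
  have hj := hpos j
  have hji := hlam hij
  rw [div_le_div_iff₀ (by positivity) (by positivity)]
  nlinarith [mul_nonneg (mul_nonneg hα.le (mul_pos hi hj).le) (sub_nonneg.2 hji),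
    mul_nonneg (mul_nonneg hβ (sub_nonneg.2 hji)) (add_pos hi hj).le]

section Conjugation

variable {n : Type*} [Fintype n] [DecidableEq n] {Q : Matrix n n ℝ}

theorem Matrix.trace_conj_of_transpose_mul_self (hQ : Qᵀ * Q = 1) (A : Matrix n n ℝ) :
    trace (Q * A * Qᵀ) = trace A := by
  rw [trace_mul_cycle, hQ, one_mul]

theorem Matrix.smul_conj_add_smul_one (hQ : Q * Qᵀ = 1) (lam : n → ℝ) (α β : ℝ) :
    α • (Q * diagonal lam * Qᵀ) + β • 1 = Q * diagonal (fun i => α * lam i + β) * Qᵀ := by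
  have : diagonal (fun i => α * lam i + β) = α • diagonal lam + β • 1 := by
    ext i j; by_cases h : i = j <;> simp [h]
  rw [this, mul_add, add_mul, Matrix.mul_smul, Matrix.smul_mul, Matrix.mul_smul, Matrix.smul_mul,
    mul_one, hQ]

theorem Matrix.trace_loss_conj (hQ : Qᵀ * Q = 1) (g lam : n → ℝ) (M : Matrix n n ℝ) (v : ℝ) :
    trace ((v ^ 2 / 2) • (Q * diagonal g * Qᵀ * (Q * diagonal lam * Qᵀ) * (Q * M * Qᵀ) *
        (Q * diagonal lam * Qᵀ) * (Q * M * Qᵀ)ᵀ) -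
        v • ((Q * diagonal lam * Qᵀ) ^ 2 * (Q * M * Qᵀ)ᵀ)) =
      v ^ 2 / 2 * ∑ i, ∑ j, g i * lam i * lam j * M i j ^ 2 - v * ∑ i, lam i ^ 2 * M i i := by
  have hcancel : ∀ A, Qᵀ * (Q * A) = A := fun A => by rw [← mul_assoc, hQ, one_mul]
  have e1 : Q * diagonal g * Qᵀ * (Q * diagonal lam * Qᵀ) * (Q * M * Qᵀ) *
      (Q * diagonal lam * Qᵀ) * (Q * M * Qᵀ)ᵀ =
      Q * (diagonal g * diagonal lam * M * diagonal lam * Mᵀ) * Qᵀ := by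
    simp only [transpose_mul, transpose_transpose, mul_assoc, hcancel]
  have e2 : (Q * diagonal lam * Qᵀ) ^ 2 * (Q * M * Qᵀ)ᵀ = Q * (diagonal lam ^ 2 * Mᵀ) * Qᵀ := by
    simp only [sq, transpose_mul, transpose_transpose, mul_assoc, hcancel]
  rw [trace_sub, trace_smul, trace_smul, e1, e2, trace_conj_of_transpose_mul_self hQ,
    trace_conj_of_transpose_mul_self hQ, smul_eq_mul, smul_eq_mul]
  congr 2
  · simp only [trace, diag_apply, mul_apply, diagonal_apply, transpose_apply, ite_mul, mul_ite,
      zero_mul, mul_zero, Finset.sum_ite_eq, Finset.sum_ite_eq', Finset.mem_univ, if_true]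
    exact sum_congr rfl fun i _ => sum_congr rfl fun j _ => by ring
  · simp [trace, mul_apply, diagonal_pow, diagonal_apply]

theorem Matrix.sum_diagonal_loss_eq (p : n → Prop) [DecidablePred p] {g lam : n → ℝ}
    (hg : ∀ i, g i ≠ 0) {c : ℝ} (hc : c ≠ 0) :
    (1 / c) ^ 2 / 2 * ∑ i, ∑ j, g i * lam i * lam j *
        diagonal (fun i => if p i then c / g i else 0) i j ^ 2 -
      1 / c * ∑ i, lam i ^ 2 * diagonal (fun i => if p i then c / g i else 0) i i =
      -(∑ i with p i, lam i ^ 2 / g i) / 2 := by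
  have hS2 : ∑ i, ∑ j, g i * lam i * lam j *
      diagonal (fun i => if p i then c / g i else 0) i j ^ 2 =
      c ^ 2 * ∑ i with p i, lam i ^ 2 / g i := by
    rw [sum_filter, mul_sum]
    refine sum_congr rfl fun i _ => ?_
    rw [Fintype.sum_eq_single i fun j hj => by simp [diagonal_apply_ne _ (Ne.symm hj)]]
    split_ifs with hi <;> simp [hi]
    field_simp [hg i]
  have hS1 : ∑ i, lam i ^ 2 * diagonal (fun i => if p i then c / g i else 0) i i =
      c * ∑ i with p i, lam i ^ 2 / g i := by
    rw [sum_filter, mul_sum]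
    refine sum_congr rfl fun i _ => ?_
    split_ifs with hi <;> simp [hi]
    field_simp [hg i]
  rw [hS2, hS1]
  field_simp
  ring

end Conjugation

section Gamma

variable {n : Type*} [Fintype n]

noncomputable def gammaEigen (N : ℕ) (lam : n → ℝ) (i : n) : ℝ :=
  (1 + 1 / (N : ℝ)) * lam i + (∑ k, lam k) / N

variable {lam : n → ℝ}

theorem gammaEigen_pos (N : ℕ) (hlam : ∀ i, 0 < lam i) (i : n) : 0 < gammaEigen N lam i := by
  have := hlam i
  have : 0 ≤ ∑ k, lam k := sum_nonneg fun k _ => (hlam k).le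
  unfold gammaEigen
  positivity

theorem div_eq_one_div_gammaEigen {N : ℕ} (hN : N ≠ 0) (i : n) :
    (N : ℝ) / ((N + 1) * lam i + ∑ k, lam k) = 1 / gammaEigen N lam i := by
  have : gammaEigen N lam i = ((N + 1) * lam i + ∑ k, lam k) / N := by
    unfold gammaEigen; field_simp
  rw [this, one_div_div]

theorem antitone_sq_div_gammaEigen [Preorder n] (N : ℕ) (hlam : Antitone lam)
    (hpos : ∀ i, 0 < lam i) : Antitone fun i => lam i ^ 2 / gammaEigen N lam i :=
  antitone_sq_div_of_antitone hlam hpos (by positivity)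
    (div_nonneg (sum_nonneg fun k _ => (hpos k).le) N.cast_nonneg)

theorem gamma_eq_conj [DecidableEq n] {Q : Matrix n n ℝ} (hQ : Qᵀ * Q = 1) (N : ℕ) :
    (1 + 1 / (N : ℝ)) • (Q * diagonal lam * Qᵀ) + (trace (Q * diagonal lam * Qᵀ) / N) • 1 =
      Q * diagonal (gammaEigen N lam) * Qᵀ := by
  rw [trace_conj_of_transpose_mul_self hQ, trace_diagonal,
    smul_conj_add_smul_one (mul_eq_one_comm.mp hQ)]
  rfl

end Gamma

theorem stmt_3_general (d N r : ℕ) (hN : 0 < N)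
    (Λ : Matrix (Fin d) (Fin d) ℝ)
    (Q D : Matrix (Fin d) (Fin d) ℝ) (lam : Fin d → ℝ)
    (hQ : Qᵀ * Q = 1) (hD : D = Matrix.diagonal lam)
    (hlam_pos : ∀ i, 0 < lam i)
    (hlam_sorted : ∀ i j : Fin d, i ≤ j → lam j ≤ lam i)
    (hΛ : Λ = Q * D * Qᵀ)
    (Γ : Matrix (Fin d) (Fin d) ℝ)
    (hΓ : Γ = (1 + 1 / (N : ℝ)) • Λ +
      (Matrix.trace Λ / (N : ℝ)) • (1 : Matrix (Fin d) (Fin d) ℝ))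
    (ℓ : Matrix (Fin d) (Fin d) ℝ → ℝ → ℝ)
    (hℓ : ∀ U u, ℓ U u =
      Matrix.trace ((u ^ 2 / 2) • (Γ * Λ * U * Λ * Uᵀ) - u • (Λ ^ 2 * Uᵀ)))
    (Vstar : Matrix (Fin d) (Fin d) ℝ)
    (hV : Vstar = Matrix.diagonal fun i : Fin d =>
      if (i : ℕ) < r then (N : ℝ) / (((N : ℝ) + 1) * lam i + Matrix.trace D)
      else 0) :
    ∀ c : ℝ, c ≠ 0 →
      ∀ (U : Matrix (Fin d) (Fin d) ℝ) (u : ℝ), U.rank ≤ r →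
        ℓ (c • (Q * Vstar * Qᵀ)) (1 / c) ≤ ℓ U u := by
  intro c hc U u hU
  subst hD hΛ hΓ hV
  have hg := gammaEigen_pos N hlam_pos
  have hloss : ∀ M v, ℓ (Q * M * Qᵀ) v =
      v ^ 2 / 2 * ∑ i, ∑ j, gammaEigen N lam i * lam i * lam j * M i j ^ 2 -
        v * ∑ i, lam i ^ 2 * M i i :=
    fun M v => by rw [hℓ, gamma_eq_conj hQ]; exact trace_loss_conj hQ _ lam M v
  have hcV : c • (Q * diagonal (fun i : Fin d => if i.val < r then
      (N : ℝ) / ((N + 1) * lam i + trace (diagonal lam)) else 0) * Qᵀ) =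
      Q * diagonal (fun i => if i.val < r then c / gammaEigen N lam i else 0) * Qᵀ := by
    rw [← Matrix.smul_mul, ← Matrix.mul_smul, ← diagonal_smul, trace_diagonal]
    simp only [div_eq_one_div_gammaEigen hN.ne', Pi.smul_def, smul_eq_mul, mul_ite, mul_zero,
      mul_one_div]
  set M := Qᵀ * U * Q
  have hUM : U = Q * M * Qᵀ := by
    rw [← mul_assoc, ← mul_assoc, mul_eq_one_comm.mp hQ, one_mul, mul_assoc,
      mul_eq_one_comm.mp hQ, mul_one]
  have hM : M.rank ≤ r := (rank_mul_le_left _ _).trans ((rank_mul_le_right _ _).trans hU)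
  rw [hcV, hloss, sum_diagonal_loss_eq _ (fun i => (hg i).ne') hc, hUM, hloss]
  refine neg_div_two_le_of_sq_le_mul
    (sum_nonneg fun i _ => (div_pos (pow_pos (hlam_pos i) 2) (hg i)).le)
    (sum_nonneg fun i _ => sum_nonneg fun j _ => ?_) ?_ u
  · have := hg i; have := hlam_pos i; have := hlam_pos j; positivity
  · exact sq_sum_mul_diag_le_of_rank_le hM (p := fun i => gammaEigen N lam i * lam i) (q := lam)
      (fun i => mul_pos (hg i) (hlam_pos i)) hlam_pos (fun i => by field_simp [(hg i).ne'])
      (antitone_sq_div_gammaEigen N hlam_sorted hlam_pos)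

/-- With `Λ = Q·D·Qᵀ` (Q orthogonal, `D = diag(λ₁ ≥ … ≥ λ_d > 0)`),
fix `1 ≤ r ≤ d` and let `V* = diag(v*)` with `v*_i = N/((N+1)·λ_i + tr(D))` for
`i ≤ r` and `v*_i = 0` for `i > r`. Then for every nonzero `c`, the pair
`(c·Q·V*·Qᵀ, 1/c)` minimizes `ℓ̃(U,u)` over all `U` with `rank(U) ≤ r` and all
`u ∈ ℝ`. -/
theorem stmt_3 (d N r : ℕ) (hd : 0 < d) (hN : 0 < N) (hr1 : 1 ≤ r) (hrd : r ≤ d)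
    (Λ : Matrix (Fin d) (Fin d) ℝ) (hΛpd : Λ.PosDef)
    (Q D : Matrix (Fin d) (Fin d) ℝ) (lam : Fin d → ℝ)
    (hQ : Qᵀ * Q = 1) (hD : D = Matrix.diagonal lam)
    (hlam_pos : ∀ i, 0 < lam i)
    (hlam_sorted : ∀ i j : Fin d, i ≤ j → lam j ≤ lam i)
    (hΛ : Λ = Q * D * Qᵀ)
    (Γ : Matrix (Fin d) (Fin d) ℝ)
    (hΓ : Γ = (1 + 1 / (N : ℝ)) • Λ +
      (Matrix.trace Λ / (N : ℝ)) • (1 : Matrix (Fin d) (Fin d) ℝ))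
    (ℓ : Matrix (Fin d) (Fin d) ℝ → ℝ → ℝ)
    (hℓ : ∀ U u, ℓ U u =
      Matrix.trace ((u ^ 2 / 2) • (Γ * Λ * U * Λ * Uᵀ) - u • (Λ ^ 2 * Uᵀ)))
    (Vstar : Matrix (Fin d) (Fin d) ℝ)
    (hV : Vstar = Matrix.diagonal fun i : Fin d =>
      if (i : ℕ) < r then (N : ℝ) / (((N : ℝ) + 1) * lam i + Matrix.trace D)
      else 0) :
    ∀ c : ℝ, c ≠ 0 →
      ∀ (U : Matrix (Fin d) (Fin d) ℝ) (u : ℝ), U.rank ≤ r →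
        ℓ (c • (Q * Vstar * Qᵀ)) (1 / c) ≤ ℓ U u :=
  stmt_3_general d N r hN Λ Q D lam hQ hD hlam_pos hlam_sorted hΛ Γ hΓ ℓ hℓ Vstar hV
end

section
/- For 1 ≤ r ≤ d, the minimum of ℓ̃(U,u) over all U ∈ ℝ^{d×d} with rank(U) ≤ r and all u ∈ ℝ equals −½·Σ_{i=1}^{r} N·λ_i²/((N+1)·λ_i + tr(D)). -/
/-!
In an eigenbasis of `Λ` both `Λ` and `Γ` are diagonal, `Γ = diagonal g` with
`g i = (1 + 1/N) λ i + tr D / N`, and the loss of `W` becomes `½ ‖M‖² - ∑ i, c i * M i i` for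
`M = u • diagonal (√(g λ)) * W * diagonal (√λ)` and `c i = λ i / √(g i)`, where `rank M ≤ r`.
If `P` is the orthogonal projection onto the column space of `M`, expanding
`0 ≤ ‖M - P * diagonal c‖²` bounds the loss below by `-½ ∑ i, c i ^ 2 * P i i`. The diagonal
entries of `P` lie in `[0, 1]` and sum to `rank M ≤ r`, so, as `c i ^ 2 = λ i ^ 2 / g i`
decreases in `i`, this is at least `-½ ∑_{i < r} λ i ^ 2 / g i`. The bound is attained at
`u = 1`, `W = diagonal (1 / g i)_{i < r}`.
-/

open Matrix Finset

theorem sum_mul_le_sum_of_threshold_s4 {ι : Type*} [Fintype ι] {s : Finset ι} {w p : ι → ℝ} {t : ℝ}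
    (ht : 0 ≤ t) (hs : ∀ i ∈ s, t ≤ w i) (hsc : ∀ i ∉ s, w i ≤ t)
    (hp : ∀ i, p i ∈ Set.Icc 0 1) (hsum : ∑ i, p i ≤ #s) :
    ∑ i, w i * p i ≤ ∑ i ∈ s, w i := by
  classical
  have hterm : ∀ i, w i * p i - (if i ∈ s then w i else 0)
      ≤ t * (p i - if i ∈ s then 1 else 0) := fun i => by
    obtain ⟨hp0, hp1⟩ := hp i
    split_ifs with hi
    · nlinarith [hs i hi]
    · nlinarith [hsc i hi]
  have htotal := sum_le_sum fun i (_ : i ∈ univ) => hterm i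
  simp only [sum_sub_distrib, ← mul_sum, sum_ite_mem, univ_inter, sum_const, nsmul_one] at htotal
  linarith [mul_nonpos_of_nonneg_of_nonpos ht (sub_nonpos.mpr hsum)]

theorem sum_mul_le_sum_val_lt_of_antitone {d r : ℕ} (hr1 : 1 ≤ r) (hrd : r ≤ d)
    {w p : Fin d → ℝ} (hw0 : ∀ i, 0 ≤ w i) (hw : Antitone w)
    (hp : ∀ i, p i ∈ Set.Icc 0 1) (hsum : ∑ i, p i ≤ r) :
    ∑ i, w i * p i ≤ ∑ i with i.val < r, w i := by
  let ρ : Fin d := ⟨r - 1, by omega⟩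
  refine sum_mul_le_sum_of_threshold_s4 (hw0 ρ) (fun i hi => hw ?_) (fun i hi => hw ?_) hp ?_
  · simp only [mem_filter, mem_univ, true_and] at hi
    exact Fin.le_def.mpr (by simp [ρ]; omega)
  · simp only [mem_filter, mem_univ, true_and, not_lt] at hi
    exact Fin.le_def.mpr (by simp [ρ]; omega)
  · rwa [Fin.card_filter_val_lt, min_eq_right hrd]

theorem monotoneOn_sq_div_mul_add {α β : ℝ} (hα : 0 < α) (hβ : 0 ≤ β) :
    MonotoneOn (fun x => x ^ 2 / (α * x + β)) (Set.Ioi 0) := by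
  intro y (hy : 0 < y) x (hx : 0 < x) hyx
  dsimp only
  rw [div_le_div_iff₀ (by positivity) (by positivity)]
  nlinarith [mul_nonneg (mul_nonneg hα.le (mul_pos hx hy).le) (sub_nonneg.mpr hyx),
    mul_nonneg (mul_nonneg hβ (sub_nonneg.mpr hyx)) (add_pos hx hy).le]

namespace Matrix

variable {n : Type*} [Fintype n] [DecidableEq n]

theorem rank_diagonal_ite_le (s : Finset n) (a : n → ℝ) :
    (diagonal fun i => if i ∈ s then a i else 0).rank ≤ #s := by
  classical
  rw [rank_diagonal, Fintype.card_subtype]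
  exact card_le_card fun i => by simp +contextual

theorem trace_mul_mul_transpose {Q : Matrix n n ℝ} (hQ : Qᵀ * Q = 1) (X : Matrix n n ℝ) :
    trace (Q * X * Qᵀ) = trace X := by
  rw [trace_mul_cycle, hQ, Matrix.one_mul]

theorem smul_add_smul_one_eq_mul_diagonal_mul {Q : Matrix n n ℝ} (hQ : Qᵀ * Q = 1)
    (l : n → ℝ) (a b : ℝ) :
    a • (Q * diagonal l * Qᵀ) + b • 1 = Q * diagonal (fun i => a * l i + b) * Qᵀ := by
  have hdiag : diagonal (fun i => a * l i + b) = a • diagonal l + b • 1 := by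
    rw [← diagonal_one, ← diagonal_smul, ← diagonal_smul, diagonal_add]
    congr 1
    ext i
    simp
  rw [hdiag, Matrix.mul_add, Matrix.add_mul, Matrix.mul_smul, Matrix.smul_mul, Matrix.mul_smul,
    Matrix.smul_mul, Matrix.mul_one, mul_eq_one_comm.mp hQ]

set_option synthInstance.maxHeartbeats 200000 in
theorem exists_isStarProjection_mul_eq_self (M : Matrix n n ℝ) :
    ∃ P : Matrix n n ℝ, IsStarProjection P ∧ P * M = M ∧ P.trace = M.rank := by
  let K := LinearMap.range (toEuclideanLin M)
  let b := (EuclideanSpace.basisFun n ℝ).toBasis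
  let e : Matrix n n ℝ ≃⋆ₐ[ℝ] _ := toEuclideanCLM
  refine ⟨e.symm K.starProjection, isStarProjection_starProjection.map _, ?_, ?_⟩
  · have h : e (e.symm K.starProjection * M) = e M := by
      rw [map_mul, StarAlgEquiv.apply_symm_apply]
      ext1 x
      exact K.starProjection_eq_self_iff.mpr (LinearMap.mem_range_self _ x)
    exact e.injective h
  · have hproj : LinearMap.IsProj K (K.starProjection : EuclideanSpace ℝ n →ₗ[ℝ] _) :=
      ⟨fun x => K.starProjection_apply_mem x, fun x hx => K.starProjection_eq_self_iff.mpr hx⟩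
    rw [← trace_toLin_eq _ b, ← toEuclideanLin_eq_toLin_orthonormal,
      ← coe_toEuclideanCLM_eq_toEuclideanLin, StarAlgEquiv.apply_symm_apply, hproj.trace,
      rank_eq_finrank_range_toLin M b b, ← toEuclideanLin_eq_toLin_orthonormal]

end Matrix

section StarProjection

variable {n : Type*} [Fintype n] {P : Matrix n n ℝ}

theorem IsStarProjection.matrix_apply_symm (hP : IsStarProjection P) (i j : n) :
    P j i = P i j := by
  simpa using congrFun₂ hP.isSelfAdjoint i j

theorem IsStarProjection.sum_sq_matrix_apply (hP : IsStarProjection P) (i : n) :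
    ∑ k, P k i ^ 2 = P i i := by
  conv_rhs => rw [← hP.isIdempotentElem.eq, mul_apply]
  exact sum_congr rfl fun k _ => by rw [sq, hP.matrix_apply_symm]

theorem IsStarProjection.matrix_diag_mem_Icc (hP : IsStarProjection P) (i : n) :
    P i i ∈ Set.Icc 0 1 := by
  have hsq : P i i ^ 2 ≤ P i i := by
    conv_rhs => rw [← hP.sum_sq_matrix_apply i]
    exact single_le_sum (f := fun k => P k i ^ 2) (fun k _ => sq_nonneg _) (mem_univ i)
  have hnonneg : 0 ≤ P i i := hP.sum_sq_matrix_apply i ▸ sum_nonneg fun k _ => sq_nonneg _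
  exact ⟨hnonneg, by nlinarith⟩

/-- Expand `0 ≤ ∑ i j, (M - P * diagonal c) i j ^ 2`. -/
theorem IsStarProjection.sum_mul_diag_sub_half_sum_sq_le (hP : IsStarProjection P)
    {M : Matrix n n ℝ} (hPM : P * M = M) (c : n → ℝ) :
    ∑ i, c i * M i i - (∑ i, ∑ j, M i j ^ 2) / 2 ≤ (∑ i, c i ^ 2 * P i i) / 2 := by
  have hcross : ∀ j, ∑ i, P i j * M i j = M j j := fun j => by
    conv_rhs => rw [← hPM, mul_apply]
    exact sum_congr rfl fun i _ => by rw [hP.matrix_apply_symm]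
  have hexpand : ∀ j, ∑ i, (M i j - P i j * c j) ^ 2
      = ∑ i, M i j ^ 2 - 2 * (c j * M j j) + c j ^ 2 * P j j := fun j => by
    rw [← hcross, ← hP.sum_sq_matrix_apply]
    simp only [mul_sum, ← sum_sub_distrib, ← sum_add_distrib]
    exact sum_congr rfl fun i _ => by ring
  have hnonneg : 0 ≤ ∑ j, ∑ i, (M i j - P i j * c j) ^ 2 := by positivity
  simp only [hexpand, sum_add_distrib, sum_sub_distrib, ← mul_sum] at hnonneg
  rw [sum_comm] at hnonneg
  linarith

end StarProjection

theorem Matrix.sum_mul_diag_sub_half_sum_sq_le_of_rank_le {d r : ℕ} (hr1 : 1 ≤ r) (hrd : r ≤ d)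
    {M : Matrix (Fin d) (Fin d) ℝ} (hM : M.rank ≤ r) {c : Fin d → ℝ}
    (hc : Antitone fun i => c i ^ 2) :
    ∑ i, c i * M i i - (∑ i, ∑ j, M i j ^ 2) / 2 ≤ (∑ i with i.val < r, c i ^ 2) / 2 := by
  obtain ⟨P, hP, hPM, htrace⟩ := M.exists_isStarProjection_mul_eq_self
  have hdiag : ∑ i, P i i ≤ r := by
    change P.trace ≤ r
    rw [htrace]
    exact_mod_cast hM
  have := sum_mul_le_sum_val_lt_of_antitone hr1 hrd (fun i => sq_nonneg (c i)) hc
    hP.matrix_diag_mem_Icc hdiag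
  linarith [hP.sum_mul_diag_sub_half_sum_sq_le hPM c]

section Loss

variable {n : Type*} [Fintype n] [DecidableEq n]

noncomputable def reducedLoss (Γ Λ U : Matrix n n ℝ) (u : ℝ) : ℝ :=
  trace ((u ^ 2 / 2) • (Γ * Λ * U * Λ * Uᵀ) - u • (Λ ^ 2 * Uᵀ))

theorem reducedLoss_conj {Q : Matrix n n ℝ} (hQ : Qᵀ * Q = 1) (A B W : Matrix n n ℝ) (u : ℝ) :
    reducedLoss (Q * A * Qᵀ) (Q * B * Qᵀ) (Q * W * Qᵀ) u = reducedLoss A B W u := by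
  have hcancel : ∀ X : Matrix n n ℝ, Qᵀ * (Q * X) = X := fun X => by
    rw [← Matrix.mul_assoc, hQ, Matrix.one_mul]
  have hexpr : (u ^ 2 / 2) • (Q * A * Qᵀ * (Q * B * Qᵀ) * (Q * W * Qᵀ) * (Q * B * Qᵀ)
        * (Q * W * Qᵀ)ᵀ) - u • ((Q * B * Qᵀ) ^ 2 * (Q * W * Qᵀ)ᵀ)
      = Q * ((u ^ 2 / 2) • (A * B * W * B * Wᵀ) - u • (B ^ 2 * Wᵀ)) * Qᵀ := by
    simp only [sq, transpose_mul, transpose_transpose, Matrix.mul_assoc, hcancel,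
      Matrix.mul_sub, Matrix.sub_mul, Matrix.mul_smul, Matrix.smul_mul]
  rw [reducedLoss, reducedLoss, hexpr, trace_mul_mul_transpose hQ]

theorem setOf_reducedLoss_conj {Q : Matrix n n ℝ} (hQ : Qᵀ * Q = 1) (A B : Matrix n n ℝ)
    (r : ℕ) :
    {y | ∃ (U : Matrix n n ℝ) (u : ℝ), U.rank ≤ r ∧ reducedLoss (Q * A * Qᵀ) (Q * B * Qᵀ) U u = y}
      = {y | ∃ (W : Matrix n n ℝ) (u : ℝ), W.rank ≤ r ∧ reducedLoss A B W u = y} := by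
  have hrank : ∀ X Y Z : Matrix n n ℝ, (X * Y * Z).rank ≤ Y.rank := fun X Y Z =>
    (rank_mul_le_left _ _).trans (rank_mul_le_right _ _)
  ext y
  constructor
  · rintro ⟨U, u, hU, rfl⟩
    have hU' : Q * (Qᵀ * U * Q) * Qᵀ = U := by
      simp only [Matrix.mul_assoc, mul_eq_one_comm.mp hQ, Matrix.mul_one]
      rw [← Matrix.mul_assoc, mul_eq_one_comm.mp hQ, Matrix.one_mul]
    exact ⟨Qᵀ * U * Q, u, (hrank _ _ _).trans hU, by rw [← reducedLoss_conj hQ, hU']⟩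
  · rintro ⟨W, u, hW, rfl⟩
    exact ⟨Q * W * Qᵀ, u, (hrank _ _ _).trans hW, reducedLoss_conj hQ A B W u⟩

theorem reducedLoss_diagonal (g l : n → ℝ) (W : Matrix n n ℝ) (u : ℝ) :
    reducedLoss (diagonal g) (diagonal l) W u
      = u ^ 2 / 2 * ∑ i, ∑ j, g i * l i * l j * W i j ^ 2 - u * ∑ i, l i ^ 2 * W i i := by
  have hquad : trace (diagonal g * diagonal l * W * diagonal l * Wᵀ)
      = ∑ i, ∑ j, g i * l i * l j * W i j ^ 2 := by
    change ∑ i, ∑ j, (diagonal g * diagonal l * W * diagonal l) i j * W i j = _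
    refine sum_congr rfl fun i _ => sum_congr rfl fun j _ => ?_
    rw [mul_diagonal, diagonal_mul_diagonal, diagonal_mul]
    ring
  have hlin : trace (diagonal l ^ 2 * Wᵀ) = ∑ i, l i ^ 2 * W i i := by
    simp [sq, trace, diagonal_mul_diagonal, diagonal_mul]
  rw [reducedLoss, trace_sub, trace_smul, trace_smul, smul_eq_mul, smul_eq_mul, hquad, hlin]

theorem reducedLoss_diagonal_ite_inv {g : n → ℝ} (hg : ∀ i, g i ≠ 0) (l : n → ℝ)
    (s : Finset n) :
    reducedLoss (diagonal g) (diagonal l) (diagonal fun i => if i ∈ s then (g i)⁻¹ else 0) 1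
      = -(1 / 2) * ∑ i ∈ s, l i ^ 2 / g i := by
  set w : n → ℝ := fun i => if i ∈ s then (g i)⁻¹ else 0
  have hrow : ∀ i, ∑ j, g i * l i * l j * diagonal w i j ^ 2 = g i * l i ^ 2 * w i ^ 2 := by
    intro i
    rw [sum_eq_single i (fun j _ hji => by simp [diagonal_apply_ne _ hji.symm]) (by simp),
      diagonal_apply_eq]
    ring
  have hterm : ∀ i, 1 / 2 * (g i * l i ^ 2 * w i ^ 2) - l i ^ 2 * w i
      = if i ∈ s then -(1 / 2) * (l i ^ 2 / g i) else 0 := by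
    intro i
    by_cases hi : i ∈ s
    · simp only [w, hi, if_true]
      field_simp [hg i]
      ring
    · simp [w, hi]
  simp only [reducedLoss_diagonal, hrow, diagonal_apply_eq, one_pow, one_mul, mul_sum,
    ← sum_sub_distrib, hterm, sum_ite_mem, univ_inter]

theorem neg_half_sum_le_reducedLoss_diagonal {d r : ℕ} (hr1 : 1 ≤ r) (hrd : r ≤ d)
    {g l : Fin d → ℝ} (hg : ∀ i, 0 < g i) (hl : ∀ i, 0 ≤ l i)
    (hanti : Antitone fun i => l i ^ 2 / g i) {W : Matrix (Fin d) (Fin d) ℝ} (hW : W.rank ≤ r)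
    (u : ℝ) :
    -(1 / 2) * ∑ i with i.val < r, l i ^ 2 / g i ≤ reducedLoss (diagonal g) (diagonal l) W u := by
  let M := diagonal (fun i => u * √(g i) * √(l i)) * W * diagonal (fun j => √(l j))
  let c i := l i / √(g i)
  have hM : M.rank ≤ r :=
    ((rank_mul_le_left _ _).trans (rank_mul_le_right _ _)).trans hW
  have hc : Antitone fun i => c i ^ 2 := by
    simpa only [c, div_pow, Real.sq_sqrt (hg _).le] using hanti
  have hMij : ∀ i j, M i j = u * √(g i) * √(l i) * W i j * √(l j) := fun i j => by
    simp only [M, mul_diagonal, diagonal_mul]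
  have hsq : ∀ i j, M i j ^ 2 = u ^ 2 * (g i * l i * l j * W i j ^ 2) := fun i j => by
    rw [hMij]
    simp only [mul_pow, Real.sq_sqrt (hg i).le, Real.sq_sqrt (hl i), Real.sq_sqrt (hl j)]
    ring
  have hdiag : ∀ i, c i * M i i = u * (l i ^ 2 * W i i) := fun i => by
    have hgi : √(g i) ≠ 0 := (Real.sqrt_pos.mpr (hg i)).ne'
    simp only [c, hMij]
    field_simp
    rw [Real.sq_sqrt (hl i)]
    ring
  have hloss : reducedLoss (diagonal g) (diagonal l) W u
      = (∑ i, ∑ j, M i j ^ 2) / 2 - ∑ i, c i * M i i := by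
    simp only [reducedLoss_diagonal, hsq, hdiag, ← mul_sum]
    ring
  have := sum_mul_diag_sub_half_sum_sq_le_of_rank_le hr1 hrd hM hc
  simp only [c, div_pow, Real.sq_sqrt (hg _).le] at this
  linarith

theorem isLeast_reducedLoss_diagonal {d r : ℕ} (hr1 : 1 ≤ r) (hrd : r ≤ d)
    {g l : Fin d → ℝ} (hg : ∀ i, 0 < g i) (hl : ∀ i, 0 ≤ l i)
    (hanti : Antitone fun i => l i ^ 2 / g i) :
    IsLeast {y | ∃ (W : Matrix (Fin d) (Fin d) ℝ) (u : ℝ),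
        W.rank ≤ r ∧ reducedLoss (diagonal g) (diagonal l) W u = y}
      (-(1 / 2) * ∑ i with i.val < r, l i ^ 2 / g i) := by
  refine ⟨⟨_, 1, (rank_diagonal_ite_le _ _).trans ?_,
    reducedLoss_diagonal_ite_inv (fun i => (hg i).ne') l _⟩, ?_⟩
  · simp [Fin.card_filter_val_lt]
  · rintro _ ⟨W, u, hW, rfl⟩
    exact neg_half_sum_le_reducedLoss_diagonal hr1 hrd hg hl hanti hW u

end Loss

theorem stmt_4_general (d N r : ℕ) (hN : 0 < N) (hr1 : 1 ≤ r) (hrd : r ≤ d)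
    (Λ : Matrix (Fin d) (Fin d) ℝ)
    (Q D : Matrix (Fin d) (Fin d) ℝ) (lam : Fin d → ℝ)
    (hQ : Qᵀ * Q = 1) (hD : D = Matrix.diagonal lam)
    (hlam_pos : ∀ i, 0 < lam i)
    (hlam_sorted : ∀ i j : Fin d, i ≤ j → lam j ≤ lam i)
    (hΛ : Λ = Q * D * Qᵀ)
    (Γ : Matrix (Fin d) (Fin d) ℝ)
    (hΓ : Γ = (1 + 1 / (N : ℝ)) • Λ +
      (Matrix.trace Λ / (N : ℝ)) • (1 : Matrix (Fin d) (Fin d) ℝ))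
    (ℓ : Matrix (Fin d) (Fin d) ℝ → ℝ → ℝ)
    (hℓ : ∀ U u, ℓ U u =
      Matrix.trace ((u ^ 2 / 2) • (Γ * Λ * U * Λ * Uᵀ) - u • (Λ ^ 2 * Uᵀ))) :
    IsLeast {y : ℝ | ∃ (U : Matrix (Fin d) (Fin d) ℝ) (u : ℝ),
        U.rank ≤ r ∧ ℓ U u = y}
      (-(1 / 2) * ∑ i : Fin d,
        if (i : ℕ) < r then
          (N : ℝ) * lam i ^ 2 / (((N : ℝ) + 1) * lam i + Matrix.trace D)
        else 0) := by
  subst hD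
  set g : Fin d → ℝ := fun i => (1 + 1 / (N : ℝ)) * lam i + trace (diagonal lam) / N
  have htr : 0 ≤ trace (diagonal lam) :=
    (trace_diagonal lam).symm ▸ sum_nonneg fun i _ => (hlam_pos i).le
  have hg : ∀ i, 0 < g i := fun i => by have := hlam_pos i; positivity
  have hanti : Antitone fun i => lam i ^ 2 / g i := fun i j hij =>
    monotoneOn_sq_div_mul_add (by positivity) (by positivity) (hlam_pos j) (hlam_pos i)
      (hlam_sorted i j hij)
  have hℓ' : ℓ = reducedLoss (Q * diagonal g * Qᵀ) (Q * diagonal lam * Qᵀ) := by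
    ext U u
    rw [hℓ, hΓ, hΛ, trace_mul_mul_transpose hQ, smul_add_smul_one_eq_mul_diagonal_mul hQ]
    rfl
  have hvalue : (∑ i : Fin d, if (i : ℕ) < r then
      (N : ℝ) * lam i ^ 2 / (((N : ℝ) + 1) * lam i + trace (diagonal lam)) else 0)
      = ∑ i with i.val < r, lam i ^ 2 / g i := by
    rw [sum_filter]
    refine sum_congr rfl fun i _ => if_congr Iff.rfl ?_ rfl
    have hN0 : (N : ℝ) ≠ 0 := Nat.cast_ne_zero.mpr hN.ne'
    simp only [g]
    field_simp
  rw [hℓ', setOf_reducedLoss_conj hQ, hvalue]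
  exact isLeast_reducedLoss_diagonal hr1 hrd hg (fun i => (hlam_pos i).le) hanti

/-- For `1 ≤ r ≤ d`, the minimum of `ℓ̃(U,u)` over all
`U ∈ ℝ^{d×d}` with `rank(U) ≤ r` and all `u ∈ ℝ` equals
`−½·Σ_{i=1}^{r} N·λ_i²/((N+1)·λ_i + tr(D))`. -/
theorem stmt_4 (d N r : ℕ) (hd : 0 < d) (hN : 0 < N) (hr1 : 1 ≤ r) (hrd : r ≤ d)
    (Λ : Matrix (Fin d) (Fin d) ℝ) (hΛpd : Λ.PosDef)
    (Q D : Matrix (Fin d) (Fin d) ℝ) (lam : Fin d → ℝ)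
    (hQ : Qᵀ * Q = 1) (hD : D = Matrix.diagonal lam)
    (hlam_pos : ∀ i, 0 < lam i)
    (hlam_sorted : ∀ i j : Fin d, i ≤ j → lam j ≤ lam i)
    (hΛ : Λ = Q * D * Qᵀ)
    (Γ : Matrix (Fin d) (Fin d) ℝ)
    (hΓ : Γ = (1 + 1 / (N : ℝ)) • Λ +
      (Matrix.trace Λ / (N : ℝ)) • (1 : Matrix (Fin d) (Fin d) ℝ))
    (ℓ : Matrix (Fin d) (Fin d) ℝ → ℝ → ℝ)
    (hℓ : ∀ U u, ℓ U u =
      Matrix.trace ((u ^ 2 / 2) • (Γ * Λ * U * Λ * Uᵀ) - u • (Λ ^ 2 * Uᵀ))) :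
    IsLeast {y : ℝ | ∃ (U : Matrix (Fin d) (Fin d) ℝ) (u : ℝ),
        U.rank ≤ r ∧ ℓ U u = y}
      (-(1 / 2) * ∑ i : Fin d,
        if (i : ℕ) < r then
          (N : ℝ) * lam i ^ 2 / (((N : ℝ) + 1) * lam i + Matrix.trace D)
        else 0) :=
  stmt_4_general d N r hN hr1 hrd Λ Q D lam hQ hD hlam_pos hlam_sorted hΛ Γ hΓ ℓ hℓ
end

section
/- For 1 ≤ r ≤ d, the minimum of ‖D'^{1/2}·D^{1/2}·(V − D'⁻¹)·D^{1/2}‖_F² over all d×d real matrices V with rank(V) ≤ r equals Σ_{i>r} λ_i²/λ'_i, and it is attained at the diagonal matrix V* = diag(v*₁,…,v*_d) with v*_i = 1/λ'_i for i ≤ r and v*_i = 0 for i > r. -/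
/-!
Write `P = D'^{1/2} D^{1/2}`, `Q = D^{1/2}` and `σᵢ = λᵢ / √λ'ᵢ`. Then `P D'⁻¹ Q = diag σ`, the
objective is `‖P V Q - diag σ‖_F²`, and `P V Q` has rank at most `r` whenever `V` has. Since
`x ↦ x² / (a x + b)` is increasing, `σᵢ²` decreases with `i`, so the claim is the diagonal case of
the Eckart–Young theorem, the minimum being attained by truncating `diag σ`.

For the lower bound, let `W` have rank at most `r` and pick an orthonormal family `v₁, …, vₙ`,
`n ≥ d - r`, in its kernel. Bessel's inequality, row by row, gives
`‖W - diag σ‖_F² ≥ ∑ₖ ‖(W - diag σ) vₖ‖² = ∑ᵢ σᵢ² tᵢ` with `tᵢ = ∑ₖ vₖ(i)² ∈ [0, 1]` and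
`∑ᵢ tᵢ = n ≥ d - r`, and such a weighted sum is at least the sum of the `d - r` smallest `σᵢ²`.
-/

open Matrix Finset

theorem monotoneOn_sq_div_affine {a b : ℝ} (ha : 0 < a) (hb : 0 ≤ b) :
    MonotoneOn (fun x => x ^ 2 / (a * x + b)) (Set.Ioi 0) := by
  intro y (hy : 0 < y) x (hx : 0 < x) hyx
  dsimp only
  rw [div_le_div_iff₀ (by positivity) (by positivity)]
  nlinarith [mul_nonneg (mul_nonneg ha.le (mul_pos hx hy).le) (sub_nonneg.2 hyx),
    mul_nonneg hb (mul_nonneg (add_pos hx hy).le (sub_nonneg.2 hyx))]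

theorem Finset.sum_le_sum_mul_of_card_le_sum {ι : Type*} [Fintype ι] (A : Finset ι)
    (s t : ι → ℝ) (c : ℝ) (hc : 0 ≤ c) (hA : ∀ i ∈ A, s i ≤ c) (hAc : ∀ i ∉ A, c ≤ s i)
    (ht0 : ∀ i, 0 ≤ t i) (ht1 : ∀ i, t i ≤ 1) (hcard : (#A : ℝ) ≤ ∑ i, t i) :
    ∑ i ∈ A, s i ≤ ∑ i, s i * t i := by
  classical
  -- termwise `(𝟙_A i - t i) * (s i - c) ≤ 0`; the `c`-terms then sum to `c * (#A - ∑ t) ≤ 0`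
  have hpt : ∀ i, (if i ∈ A then s i else 0)
      ≤ s i * t i + c * ((if i ∈ A then 1 else 0) - t i) := by
    intro i
    split_ifs with hi
    · nlinarith [hA i hi, ht1 i]
    · nlinarith [hAc i hi, ht0 i]
  calc ∑ i ∈ A, s i = ∑ i, if i ∈ A then s i else 0 := by rw [sum_ite_mem, univ_inter]
    _ ≤ ∑ i, (s i * t i + c * ((if i ∈ A then 1 else 0) - t i)) := sum_le_sum fun i _ => hpt i
    _ = ∑ i, s i * t i + c * (#A - ∑ i, t i) := by
      rw [sum_add_distrib, ← mul_sum, sum_sub_distrib, sum_boole, filter_mem_eq_inter, univ_inter]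
    _ ≤ ∑ i, s i * t i := by nlinarith

theorem Fin.card_filter_le_val (d r : ℕ) : #{i : Fin d | r ≤ (i : ℕ)} = d - r := by
  rw [card_filter, Fin.sum_univ_eq_sum_range (fun i => if r ≤ i then 1 else 0), ← card_filter,
    range_eq_Ico, Ico_filter_le, Nat.card_Ico]
  omega

theorem Fin.sum_tail_le_sum_mul {d : ℕ} (r : ℕ) (s t : Fin d → ℝ) (hs : Antitone s)
    (hs0 : ∀ i, 0 ≤ s i) (ht0 : ∀ i, 0 ≤ t i) (ht1 : ∀ i, t i ≤ 1)
    (hsum : ((d - r : ℕ) : ℝ) ≤ ∑ i, t i) :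
    (∑ i : Fin d, if r ≤ (i : ℕ) then s i else 0) ≤ ∑ i, s i * t i := by
  rw [← sum_filter]
  refine sum_le_sum_mul_of_card_le_sum _ s t (if h : r < d then s ⟨r, h⟩ else 0) ?_ ?_ ?_ ht0 ht1
    (by rwa [Fin.card_filter_le_val])
  · split_ifs
    exacts [hs0 _, le_rfl]
  · intro i hi
    rw [mem_filter] at hi
    rw [dif_pos (hi.2.trans_lt i.isLt)]
    exact hs (Fin.le_def.2 hi.2)
  · intro i hi
    simp only [mem_filter, mem_univ, true_and, not_le] at hi
    split_ifs with h
    · exact hs (Fin.le_def.2 hi.le)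
    · exact hs0 i

section Orthonormal

variable {ι m : Type*} [Fintype ι] [Fintype m] {n : ℕ} {v : Fin n → EuclideanSpace ℝ ι}

theorem Orthonormal.sum_sq_mulVec_le (hv : Orthonormal ℝ v) (M : Matrix m ι ℝ) :
    ∑ k, ∑ j, (M *ᵥ v k) j ^ 2 ≤ ∑ j, ∑ i, M j i ^ 2 := by
  rw [sum_comm]
  refine sum_le_sum fun j _ => ?_
  have h := hv.sum_inner_products_le (𝕜 := ℝ) (WithLp.toLp 2 (M j)) (s := univ)
  simpa [EuclideanSpace.norm_sq_eq, PiLp.inner_apply, mulVec, dotProduct, mul_comm] using h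

theorem Orthonormal.sum_sq_apply_le_one (hv : Orthonormal ℝ v) (i : ι) :
    ∑ k, v k i ^ 2 ≤ 1 := by
  classical
  simpa [EuclideanSpace.inner_single_right, sq_abs] using
    hv.sum_inner_products_le (𝕜 := ℝ) (EuclideanSpace.single i (1 : ℝ)) (s := univ)

theorem Orthonormal.sum_sum_sq_apply (hv : Orthonormal ℝ v) :
    ∑ i, ∑ k, v k i ^ 2 = n := by
  rw [sum_comm]
  simp [← EuclideanSpace.real_norm_sq_eq, hv.1]

end Orthonormal

namespace Matrix

theorem exists_orthonormal_mulVec_eq_zero {m ι : Type*} [Fintype m] [Fintype ι]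
    [DecidableEq ι] {r : ℕ} (W : Matrix m ι ℝ) (hW : W.rank ≤ r) :
    ∃ (n : ℕ) (v : Fin n → EuclideanSpace ℝ ι),
      Fintype.card ι - r ≤ n ∧ Orthonormal ℝ v ∧ ∀ k, W *ᵥ v k = 0 := by
  set L := toLpLin 2 2 W with hL
  have hdim := L.finrank_range_add_finrank_ker
  have hrank : W.rank = Module.finrank ℝ (LinearMap.range L) := by
    rw [hL, toLpLin_eq_toLin]
    exact rank_eq_finrank_range_toLin ..
  rw [finrank_euclideanSpace] at hdim
  let b := stdOrthonormalBasis ℝ (LinearMap.ker L)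
  refine ⟨_, fun k => b k, by omega, b.orthonormal.comp_linearIsometry (Submodule.subtypeₗᵢ _),
    fun k => ?_⟩
  have hk : L (b k) = 0 := (b k).2
  rwa [toLpLin_apply, WithLp.toLp_eq_zero] at hk

theorem sum_tail_sq_le_sum_sq_sub_diagonal {d r : ℕ} (σ : Fin d → ℝ)
    (hσ : Antitone fun i => σ i ^ 2) (W : Matrix (Fin d) (Fin d) ℝ) (hW : W.rank ≤ r) :
    (∑ i : Fin d, if r ≤ (i : ℕ) then σ i ^ 2 else 0) ≤ ∑ i, ∑ j, (W - diagonal σ) i j ^ 2 := by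
  obtain ⟨n, v, hn, hv, hker⟩ := W.exists_orthonormal_mulVec_eq_zero hW
  have hmul : ∀ k j, ((W - diagonal σ) *ᵥ v k) j = -(σ j * v k j) := by
    simp [sub_mulVec, hker, mulVec_diagonal]
  calc (∑ i : Fin d, if r ≤ (i : ℕ) then σ i ^ 2 else 0)
      ≤ ∑ i, σ i ^ 2 * ∑ k, v k i ^ 2 := by
        refine Fin.sum_tail_le_sum_mul r _ _ hσ (fun i => sq_nonneg _)
          (fun i => sum_nonneg fun k _ => sq_nonneg _) hv.sum_sq_apply_le_one ?_
        rw [hv.sum_sum_sq_apply]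
        exact_mod_cast Fintype.card_fin d ▸ hn
    _ = ∑ k, ∑ j, ((W - diagonal σ) *ᵥ v k) j ^ 2 := by
        simp only [hmul, neg_sq, mul_pow, mul_sum]
        exact sum_comm
    _ ≤ ∑ i, ∑ j, (W - diagonal σ) i j ^ 2 := hv.sum_sq_mulVec_le _

theorem sum_sum_diagonal_sq {ι : Type*} [Fintype ι] [DecidableEq ι] (w : ι → ℝ) :
    ∑ i, ∑ j, diagonal w i j ^ 2 = ∑ i, w i ^ 2 := by
  simp [diagonal_apply, ite_pow]

theorem rank_diagonal_le {d : ℕ} (r : ℕ) (w : Fin d → ℝ)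
    (hw : ∀ i : Fin d, r ≤ (i : ℕ) → w i = 0) : (diagonal w).rank ≤ r := by
  classical
  rw [rank_diagonal]
  calc Fintype.card {i // w i ≠ 0}
      ≤ Fintype.card (Fin r) :=
        Fintype.card_le_of_injective (fun i => ⟨i.1, not_le.1 fun h => i.2 (hw i.1 h)⟩)
          fun i j hij => Subtype.ext (Fin.ext (Fin.mk.inj_iff.1 hij))
    _ = r := Fintype.card_fin r

end Matrix

theorem stmt_5_general (d N r : ℕ)
    (lam : Fin d → ℝ)
    (hlam_pos : ∀ i, 0 < lam i)
    (hlam_sorted : ∀ i j : Fin d, i ≤ j → lam j ≤ lam i)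
    (D : Matrix (Fin d) (Fin d) ℝ) (hD : D = Matrix.diagonal lam)
    (lam' : Fin d → ℝ)
    (hlam' : ∀ i, lam' i = (1 + 1 / (N : ℝ)) * lam i + Matrix.trace D / (N : ℝ))
    (D' : Matrix (Fin d) (Fin d) ℝ) (hD' : D' = Matrix.diagonal lam')
    (F : Matrix (Fin d) (Fin d) ℝ → ℝ)
    (hF : ∀ V, F V = ∑ i : Fin d, ∑ j : Fin d,
      ((Matrix.diagonal (fun k : Fin d => Real.sqrt (lam' k)) *
        Matrix.diagonal (fun k : Fin d => Real.sqrt (lam k)) *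
        (V - D'⁻¹) *
        Matrix.diagonal (fun k : Fin d => Real.sqrt (lam k))) i j) ^ 2)
    (Vstar : Matrix (Fin d) (Fin d) ℝ)
    (hV : Vstar = Matrix.diagonal fun i : Fin d =>
      if (i : ℕ) < r then 1 / lam' i else 0) :
    IsLeast {y : ℝ | ∃ V : Matrix (Fin d) (Fin d) ℝ, V.rank ≤ r ∧ F V = y}
      (∑ i : Fin d, if r ≤ (i : ℕ) then lam i ^ 2 / lam' i else 0) ∧
    Vstar.rank ≤ r ∧
    F Vstar = ∑ i : Fin d, if r ≤ (i : ℕ) then lam i ^ 2 / lam' i else 0 := by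
  have htr : 0 ≤ trace D / N := by
    rw [hD, trace_diagonal]
    exact div_nonneg (sum_nonneg fun i _ => (hlam_pos i).le) N.cast_nonneg
  have hlam'_pos : ∀ i, 0 < lam' i := fun i => by
    rw [hlam']
    have := hlam_pos i
    positivity
  set σ : Fin d → ℝ := fun i => lam i / √(lam' i)
  have hσ_sq : ∀ i, σ i ^ 2 = lam i ^ 2 / lam' i := fun i => by
    rw [div_pow, Real.sq_sqrt (hlam'_pos i).le]
  have hσ : ∀ i, √(lam' i) * √(lam i) * (lam' i)⁻¹ * √(lam i) = σ i := fun i => by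
    have := Real.sqrt_pos.2 (hlam'_pos i)
    simp only [σ]
    field_simp
    rw [Real.sq_sqrt (hlam'_pos i).le, Real.sq_sqrt (hlam_pos i).le,
      mul_div_cancel_left₀ _ (hlam'_pos i).ne']
  have hσ_anti : Antitone fun i => σ i ^ 2 := fun i j hij => by
    simp only [hσ_sq, hlam']
    exact monotoneOn_sq_div_affine (by positivity) htr (hlam_pos j) (hlam_pos i)
      (hlam_sorted i j hij)
  have hDinv : D'⁻¹ = diagonal fun i => (lam' i)⁻¹ := by
    rw [hD']
    refine inv_eq_left_inv ?_
    rw [diagonal_mul_diagonal, ← diagonal_one]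
    exact congrArg diagonal (funext fun i => inv_mul_cancel₀ (hlam'_pos i).ne')
  have hF' : ∀ V, F V = ∑ i, ∑ j, (diagonal (fun k => √(lam' k) * √(lam k)) * V *
      diagonal (fun k => √(lam k)) - diagonal σ) i j ^ 2 := fun V => by
    rw [hF, diagonal_mul_diagonal, mul_sub, sub_mul, hDinv, diagonal_mul_diagonal,
      diagonal_mul_diagonal]
    simp only [hσ]
  have hFVstar : F Vstar = ∑ i : Fin d, if r ≤ (i : ℕ) then lam i ^ 2 / lam' i else 0 := by
    rw [hF', hV, diagonal_mul_diagonal, diagonal_mul_diagonal, diagonal_sub,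
      sum_sum_diagonal_sq]
    refine sum_congr rfl fun i _ => ?_
    split_ifs <;> first | omega | simp [one_div, hσ, hσ_sq]
  have hVrank : Vstar.rank ≤ r :=
    hV ▸ rank_diagonal_le r _ fun i hi => if_neg (not_lt.2 hi)
  refine ⟨⟨⟨Vstar, hVrank, hFVstar⟩, ?_⟩, hVrank, hFVstar⟩
  rintro _ ⟨V, hVr, rfl⟩
  rw [hF']
  simp only [← hσ_sq]
  exact sum_tail_sq_le_sum_sq_sub_diagonal σ hσ_anti _
    (((rank_mul_le_left _ _).trans (rank_mul_le_right _ _)).trans hVr)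

/-- With `D = diag(λ₁ ≥ … ≥ λ_d > 0)` and
`D' = (1+1/N)·D + (tr(D)/N)·I` (entries `λ'_i`), for `1 ≤ r ≤ d` the minimum of
`‖D'^{1/2}·D^{1/2}·(V − D'⁻¹)·D^{1/2}‖_F²` over all `d×d` real `V` with
`rank(V) ≤ r` equals `Σ_{i>r} λ_i²/λ'_i`, attained at the diagonal matrix
`V* = diag(v*)` with `v*_i = 1/λ'_i` for `i ≤ r` and `v*_i = 0` for `i > r`. -/
theorem stmt_5 (d N r : ℕ) (hd : 0 < d) (hN : 0 < N) (hr1 : 1 ≤ r) (hrd : r ≤ d)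
    (lam : Fin d → ℝ)
    (hlam_pos : ∀ i, 0 < lam i)
    (hlam_sorted : ∀ i j : Fin d, i ≤ j → lam j ≤ lam i)
    (D : Matrix (Fin d) (Fin d) ℝ) (hD : D = Matrix.diagonal lam)
    (lam' : Fin d → ℝ)
    (hlam' : ∀ i, lam' i = (1 + 1 / (N : ℝ)) * lam i + Matrix.trace D / (N : ℝ))
    (D' : Matrix (Fin d) (Fin d) ℝ) (hD' : D' = Matrix.diagonal lam')
    (F : Matrix (Fin d) (Fin d) ℝ → ℝ)
    (hF : ∀ V, F V = ∑ i : Fin d, ∑ j : Fin d,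
      ((Matrix.diagonal (fun k : Fin d => Real.sqrt (lam' k)) *
        Matrix.diagonal (fun k : Fin d => Real.sqrt (lam k)) *
        (V - D'⁻¹) *
        Matrix.diagonal (fun k : Fin d => Real.sqrt (lam k))) i j) ^ 2)
    (Vstar : Matrix (Fin d) (Fin d) ℝ)
    (hV : Vstar = Matrix.diagonal fun i : Fin d =>
      if (i : ℕ) < r then 1 / lam' i else 0) :
    IsLeast {y : ℝ | ∃ V : Matrix (Fin d) (Fin d) ℝ, V.rank ≤ r ∧ F V = y}
      (∑ i : Fin d, if r ≤ (i : ℕ) then lam i ^ 2 / lam' i else 0) ∧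
    Vstar.rank ≤ r ∧
    F Vstar = ∑ i : Fin d, if r ≤ (i : ℕ) then lam i ^ 2 / lam' i else 0 :=
  stmt_5_general d N r lam hlam_pos hlam_sorted D hD lam' hlam' D' hD' F hF Vstar hV
end
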